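/- arXiv:1107.3734 — 2 statements merged into one kernel-verified Lean document; each statement's English description precedes it below -/
import Mathlib

section
/- For real ν > 1 and any integer w ≥ 1, w^ν - (⌈(w-1)/2⌉^ν + ⌊(w-1)/2⌋^ν) ≥ (1 - 2^{1-ν})·w^ν. -/
open Real

/-- For real `ν > 1` and any integer `w ≥ 1`,
`w^ν - (⌈(w-1)/2⌉^ν + ⌊(w-1)/2⌋^ν) ≥ (1 - 2^(1-ν)) * w^ν`. -/
theorem stmt_2 (ν : ℝ) (hν : 1 < ν) (w : ℤ) (hw : 1 ≤ w) :
    (w : ℝ) ^ ν - ((⌈((w : ℝ) - 1) / 2⌉ : ℝ) ^ ν + (⌊((w : ℝ) - 1) / 2⌋ : ℝ) ^ ν)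
      ≥ (1 - (2 : ℝ) ^ (1 - ν)) * (w : ℝ) ^ ν := by
  have hw1 : (1:ℝ) ≤ (w:ℝ) := by exact_mod_cast hw
  have hw0 : (0:ℝ) ≤ (w:ℝ) := by linarith
  have hx0 : (0:ℝ) ≤ ((w:ℝ) - 1) / 2 := by linarith
  set c : ℤ := ⌈((w : ℝ) - 1) / 2⌉ with hc
  set f : ℤ := ⌊((w : ℝ) - 1) / 2⌋ with hf
  have hc0 : (0:ℝ) ≤ (c:ℝ) := by
    have h : (0:ℤ) ≤ c := Int.ceil_nonneg hx0
    exact_mod_cast h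
  have hf0 : (0:ℝ) ≤ (f:ℝ) := by
    have h : (0:ℤ) ≤ f := Int.floor_nonneg.mpr hx0
    exact_mod_cast h
  have hclt : (c:ℝ) < ((w:ℝ) - 1) / 2 + 1 := Int.ceil_lt_add_one _
  have hcz : 2 * c ≤ w := by
    have : ((2 * c : ℤ) : ℝ) < ((w + 1 : ℤ) : ℝ) := by push_cast; linarith
    have h2 : (2*c : ℤ) < w + 1 := by exact_mod_cast this
    omega
  have hcle : (c:ℝ) ≤ (w:ℝ) / 2 := by
    have : ((2 * c : ℤ) : ℝ) ≤ ((w : ℤ) : ℝ) := by exact_mod_cast hcz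
    push_cast at this; linarith
  have hfle : (f:ℝ) ≤ (w:ℝ) / 2 := by
    have := Int.floor_le (((w : ℝ) - 1) / 2)
    linarith
  have hν0 : 0 ≤ ν := by linarith
  have h1 : (c:ℝ) ^ ν ≤ ((w:ℝ)/2) ^ ν := Real.rpow_le_rpow hc0 hcle hν0
  have h2 : (f:ℝ) ^ ν ≤ ((w:ℝ)/2) ^ ν := Real.rpow_le_rpow hf0 hfle hν0
  have hdiv : ((w:ℝ)/2) ^ ν = (w:ℝ) ^ ν / (2:ℝ) ^ ν :=
    Real.div_rpow hw0 (by norm_num : (0:ℝ) ≤ 2) ν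
  have hsub : (2:ℝ) ^ (1 - ν) = 2 / (2:ℝ) ^ ν := by
    rw [Real.rpow_sub (by norm_num : (0:ℝ) < 2), Real.rpow_one]
  have hpos : 0 < (2:ℝ) ^ ν := Real.rpow_pos_of_pos (by norm_num) ν
  have key : (2:ℝ) ^ (1 - ν) * (w:ℝ) ^ ν = 2 * ((w:ℝ) ^ ν / (2:ℝ) ^ ν) := by
    rw [hsub]; field_simp
  nlinarith [h1, h2, hdiv, key]
end

section
/- Let ν ∈ (1,3), and let integers w ≥ 1 and k ≥ 1 with w = (k+1)q + b, 0 ≤ b < k+1. Then w^ν - b·(q+1)^ν - (k+1-b)·q^ν ≥ (1 - (k+1)^{1-ν})·(w^ν - w). -/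
/-!
With `n = k + 1` and `w = n q + b`, let `G x` be the difference of the two sides with the exponent
`x` in place of `ν`. Then `G 1 = 0`, and `n² G 3 = n q (n² - 1 - 3 b (n - b)) + b (b² - 1)`, which
is nonnegative because `3 b (n - b) < n²` and all quantities are integers. For `q ≥ 1`, `G` is
concave in `x ≥ 1`: up to the concave term `-w n^(1-x)`, it is `-n` times the Jensen gap
`θ u^x + (1-θ) v^x - (θ u + (1-θ) v)^x` of `t ↦ t^x` at `u = q + 1`, `v = q`, and the second
derivative of this gap in `x` is the Jensen gap of `t ↦ t^x (log t)²`, which is convex on `[1, ∞)`.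
So `G ≥ 0` on `[1, 3]`. For `q = 0`, `G x = n^(1-x) (b^x - b) ≥ 0`.
-/

open Real Set

lemma convexOn_rpow_mul_log_sq {p : ℝ} (hp : 1 ≤ p) :
    ConvexOn ℝ (Ici 1) fun t : ℝ => t ^ p * log t ^ 2 := by
  refine convexOn_of_hasDerivWithinAt2_nonneg (convex_Ici 1)
    (f' := fun t => t ^ (p - 1) * (p * log t ^ 2 + 2 * log t))
    (f'' := fun t => t ^ (p - 2) * (p * (p - 1) * log t ^ 2 + 2 * (2 * p - 1) * log t + 2))
    ?_ ?_ ?_ ?_ <;> intro t ht <;> try rw [interior_Ici] at ht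
  · have ht0 : t ≠ 0 := (zero_lt_one.trans_le ht).ne'
    exact ((continuousAt_rpow_const t p (.inl ht0)).mul
      ((continuousAt_log ht0).pow 2)).continuousWithinAt
  · have ht0 : t ≠ 0 := (zero_lt_one.trans ht).ne'
    have h := (hasDerivAt_rpow_const (p := p) (.inl ht0)).mul ((hasDerivAt_log ht0).pow 2)
    refine (h.congr_deriv ?_).hasDerivWithinAt
    simp only [Pi.pow_apply, rpow_sub_one ht0]
    field_simp
    ring
  · have ht0 : t ≠ 0 := (zero_lt_one.trans ht).ne'
    have h := (hasDerivAt_rpow_const (p := p - 1) (.inl ht0)).mul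
      ((((hasDerivAt_log ht0).pow 2).const_mul p).add ((hasDerivAt_log ht0).const_mul 2))
    refine (h.congr_deriv ?_).hasDerivWithinAt
    simp only [Pi.pow_apply, Pi.add_apply, show p - 2 = p - 1 - 1 by ring, rpow_sub_one ht0 (p - 1)]
    field_simp
    ring
  · have hL : 0 ≤ log t := log_nonneg ht.out.le
    have : 0 ≤ p * (p - 1) * log t ^ 2 + 2 * (2 * p - 1) * log t + 2 := by
      nlinarith [mul_nonneg (mul_nonneg (by linarith : 0 ≤ p) (sub_nonneg.2 hp))
        (sq_nonneg (log t)), mul_nonneg (by linarith : 0 ≤ 2 * p - 1) hL]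
    exact mul_nonneg (rpow_nonneg (by linarith [ht.out]) _) this

lemma convexOn_rpow_jensen_gap {u v θ : ℝ} (hu : 1 ≤ u) (hv : 1 ≤ v) (hθ0 : 0 ≤ θ) (hθ1 : θ ≤ 1) :
    ConvexOn ℝ (Ici 1) fun x : ℝ => θ * u ^ x + (1 - θ) * v ^ x - (θ * u + (1 - θ) * v) ^ x := by
  set m := θ * u + (1 - θ) * v
  have hm : 1 ≤ m := by nlinarith
  have hexp : ∀ {d : ℝ}, 1 ≤ d → ∀ x : ℝ, HasDerivAt (fun x => d ^ x) (d ^ x * log d) x :=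
    fun hd x => (hasStrictDerivAt_const_rpow (by linarith) x).hasDerivAt
  have hf' : ∀ x, HasDerivAt (fun x : ℝ => θ * u ^ x + (1 - θ) * v ^ x - m ^ x)
      (θ * (u ^ x * log u) + (1 - θ) * (v ^ x * log v) - m ^ x * log m) x := fun x =>
    (((hexp hu x).const_mul θ).add ((hexp hv x).const_mul (1 - θ))).sub (hexp hm x)
  have hf'' : ∀ x, HasDerivAt
      (fun x : ℝ => θ * (u ^ x * log u) + (1 - θ) * (v ^ x * log v) - m ^ x * log m)
      (θ * (u ^ x * log u ^ 2) + (1 - θ) * (v ^ x * log v ^ 2) - m ^ x * log m ^ 2) x := by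
    intro x
    refine (((((hexp hu x).mul_const (log u)).const_mul θ).add
      (((hexp hv x).mul_const (log v)).const_mul (1 - θ))).sub
      ((hexp hm x).mul_const (log m))).congr_deriv ?_
    ring
  refine convexOn_of_hasDerivWithinAt2_nonneg (convex_Ici 1)
    (fun x _ => (hf' x).continuousAt.continuousWithinAt)
    (fun x _ => (hf' x).hasDerivWithinAt) (fun x _ => (hf'' x).hasDerivWithinAt) ?_
  intro x hx
  simp only [interior_Ici, mem_Ioi] at hx
  have := (convexOn_rpow_mul_log_sq hx.le).2 (mem_Ici.2 hu) (mem_Ici.2 hv) hθ0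
    (sub_nonneg.2 hθ1) (add_sub_cancel θ 1)
  simp only [smul_eq_mul] at this
  linarith

/-- The left side minus the right side of the theorem, for `k + 1 = n`, `w = n q + b`, `ν = x`. -/
noncomputable def stealGap (n q b x : ℝ) : ℝ :=
  n ^ (1 - x) * ((n * q + b) ^ x - (n * q + b)) + (n * q + b) - b * (q + 1) ^ x - (n - b) * q ^ x

lemma stealGap_one (n q b : ℝ) : stealGap n q b 1 = 0 := by
  simp only [stealGap, sub_self, rpow_zero, rpow_one]
  ring

lemma concaveOn_stealGap {n q b : ℝ} (hn : 0 < n) (hb0 : 0 ≤ b) (hbn : b ≤ n) (hq : 1 ≤ q) :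
    ConcaveOn ℝ (Ici 1) (stealGap n q b) := by
  have hgap := convexOn_rpow_jensen_gap (u := q + 1) (v := q) (θ := b / n) (by linarith) hq
    (by positivity) ((div_le_one hn).2 hbn)
  have hexp := (convexOn_rpow_left (inv_pos.2 hn)).subset (subset_univ _) (convex_Ici 1)
  have hW : 0 ≤ n * q + b := by positivity
  refine ((((hexp.smul (mul_nonneg hn.le hW)).add (hgap.smul hn.le)).neg).add_const
    (n * q + b)).congr fun x _ => ?_
  have hmean : b / n * (q + 1) + (1 - b / n) * q = (n * q + b) / n := by
    field_simp
    ring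
  simp only [stealGap, Pi.neg_apply, Pi.add_apply, smul_eq_mul, hmean]
  rw [div_rpow hW hn.le, inv_rpow hn.le, rpow_sub hn, rpow_one]
  have : 0 < n ^ x := rpow_pos_of_pos hn x
  field_simp
  ring

lemma stealGap_three_nonneg {n q b : ℕ} (hn : 0 < n) (hb : b ≤ n) :
    0 ≤ stealGap n q b 3 := by
  obtain ⟨c, rfl⟩ := Nat.exists_eq_add_of_le hb
  have hbc : 3 * b * c < (b + c) ^ 2 := by
    zify at hn ⊢
    nlinarith [sq_nonneg ((b : ℤ) - c), sq_pos_of_pos hn]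
  have hbb : b ≤ b ^ 3 := Nat.le_self_pow (by norm_num) b
  have hn' : (0 : ℝ) < b + c := by exact_mod_cast hn
  have hexpand : ((b : ℝ) + c) ^ 2 * stealGap (b + c : ℕ) q b 3
      = (b + c) * q * ((b + c) ^ 2 - (3 * b * c + 1)) + (b ^ 3 - b) := by
    rw [stealGap, show (1 : ℝ) - 3 = -2 by norm_num]
    push_cast
    simp only [rpow_neg hn'.le, rpow_ofNat]
    field_simp
    ring
  have hrhs : 0 ≤ ((b : ℝ) + c) * q * ((b + c) ^ 2 - (3 * b * c + 1)) + (b ^ 3 - b) := by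
    have h2 : (b : ℝ) ≤ b ^ 3 := by exact_mod_cast hbb
    have h1 : (3 * b * c + 1 : ℝ) ≤ (b + c) ^ 2 := by exact_mod_cast hbc
    have := sub_nonneg.2 h1
    have := sub_nonneg.2 h2
    positivity
  exact nonneg_of_mul_nonneg_right (hexpand ▸ hrhs) (by positivity)

lemma stealGap_nonneg {n q b : ℕ} {x : ℝ} (hn : 0 < n) (hb : b ≤ n) (hx1 : 1 ≤ x) (hx3 : x ≤ 3) :
    0 ≤ stealGap n q b x := by
  rcases Nat.eq_zero_or_pos q with rfl | hq
  · have hx0 : x ≠ 0 := by linarith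
    have hbx : (b : ℝ) ≤ b ^ x := by
      rcases Nat.eq_zero_or_pos b with rfl | hb0
      · simp [zero_rpow hx0]
      · exact self_le_rpow_of_one_le (by exact_mod_cast hb0) hx1
    simp only [stealGap, Nat.cast_zero, mul_zero, zero_add, one_rpow, zero_rpow hx0]
    have := rpow_nonneg (Nat.cast_nonneg n) (1 - x)
    nlinarith
  · calc 0 ≤ min (stealGap n q b 1) (stealGap n q b 3) :=
          le_min (stealGap_one _ _ _).ge (stealGap_three_nonneg hn hb)
      _ ≤ stealGap n q b x :=
          (concaveOn_stealGap (by exact_mod_cast hn) (Nat.cast_nonneg b) (by exact_mod_cast hb)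
            (by exact_mod_cast hq)).min_le_of_mem_Icc self_mem_Ici (by norm_num : (1 : ℝ) ≤ 3)
            ⟨hx1, hx3⟩

theorem stmt_5_general (ν : ℝ) (hν1 : 1 < ν) (hν3 : ν < 3) (w k q b : ℕ)
    (hsplit : w = (k + 1) * q + b) (hb : b < k + 1) :
    (w : ℝ) ^ ν - (b : ℝ) * ((q : ℝ) + 1) ^ ν - ((k : ℝ) + 1 - b) * (q : ℝ) ^ ν
      ≥ (1 - ((k : ℝ) + 1) ^ (1 - ν)) * ((w : ℝ) ^ ν - (w : ℝ)) := by
  have h := stealGap_nonneg (q := q) k.succ_pos hb.le hν1.le hν3.le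
  rw [stealGap] at h
  subst hsplit
  push_cast at h ⊢
  linarith

/-- Cooperative-steal potential decrease: for `ν ∈ (1,3)` and integers
`w ≥ 1`, `k ≥ 1` with `w = (k+1)q + b`, `0 ≤ b < k+1`,
`w^ν - b(q+1)^ν - (k+1-b)q^ν ≥ (1 - (k+1)^(1-ν))(w^ν - w)`. -/
theorem stmt_5 (ν : ℝ) (hν1 : 1 < ν) (hν3 : ν < 3) (w k q b : ℕ)
    (hw : 1 ≤ w) (hk : 1 ≤ k) (hsplit : w = (k + 1) * q + b) (hb : b < k + 1) :
    (w : ℝ) ^ ν - (b : ℝ) * ((q : ℝ) + 1) ^ ν - ((k : ℝ) + 1 - b) * (q : ℝ) ^ ν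
      ≥ (1 - ((k : ℝ) + 1) ^ (1 - ν)) * ((w : ℝ) ^ ν - (w : ℝ)) :=
  stmt_5_general ν hν1 hν3 w k q b hsplit hb
end
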